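/- For every odd integer n ≥ 3, the matrix A_n is invertible and the matrix A_n⁻¹ B_n is skew-symmetric, i.e. (A_n⁻¹B_n)ᵀ = −A_n⁻¹B_n. -/

import Mathlib

open Matrix

/-- The n×n circulant matrix with 1 on the diagonal and 1/2 on the (mod n)
super- and sub-diagonals. -/
noncomputable def matA (n : ℕ) [NeZero n] : Matrix (Fin n) (Fin n) ℝ :=
  fun i j => if j = i then 1 else if j = i + 1 ∨ j = i - 1 then (1 : ℝ)/2 else 0

/-- The n×n circulant central-difference matrix with 1 on the (mod n)
super-diagonal and -1 on the (mod n) sub-diagonal. -/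
def matB (n : ℕ) [NeZero n] : Matrix (Fin n) (Fin n) ℝ :=
  fun i j => if j = i + 1 then 1 else if j = i - 1 then -1 else 0

/-!
With `σ = circulant (Pi.single 1 1)` and `τ = circulant (Pi.single (-1) 1) = σ⁻¹ = σᵀ` we have
`A = ½ (1 + σ)(1 + τ)` and `B = τ - σ`. Since `σⁿ = 1` and `n` is odd,
`(1 + σ) ∑_{i<n} (-σ)ⁱ = 1 - (-σ)ⁿ = 2`, so `1 + σ`, and likewise `1 + τ`, is invertible.
Then `A` is symmetric, `B` is skew-symmetric and circulant matrices commute, so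
`(A⁻¹B)ᵀ = Bᵀ A⁻¹ = -B A⁻¹ = -A⁻¹ B`.
-/

theorem isUnit_one_add_of_pow_eq_one {R : Type*} [Ring R] {u : R} {n : ℕ} (hu : u ^ n = 1)
    (hn : Odd n) (h2 : IsUnit (2 : R)) : IsUnit (1 + u) := by
  have hl := mul_neg_geom_sum (-u) n
  have hr := geom_sum_mul_neg (-u) n
  rw [sub_neg_eq_add, hn.neg_pow, hu, sub_neg_eq_add, one_add_one_eq_two] at hl hr
  exact (Commute.isUnit_mul_iff (hl.trans hr.symm) |>.mp (hl ▸ h2)).1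

theorem Matrix.transpose_inv_mul_eq_neg_of_commute {m R : Type*} [Fintype m] [DecidableEq m]
    [CommRing R] {A B : Matrix m m R} (hA : IsUnit A) (hAt : Aᵀ = A) (hBt : Bᵀ = -B)
    (hAB : Commute A B) : (A⁻¹ * B)ᵀ = -(A⁻¹ * B) := by
  obtain ⟨u, rfl⟩ := hA
  have hinv : Commute (↑u)⁻¹ B := by simpa only [coe_units_inv] using hAB.units_inv_left
  rw [transpose_mul, transpose_nonsing_inv, hAt, hBt, neg_mul, hinv.eq]

section CirculantSingle

variable {G α : Type*} [AddGroup G] [DecidableEq G]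

theorem Matrix.transpose_circulant_single_one [Zero α] [One α] (a : G) :
    (circulant (Pi.single a (1 : α)))ᵀ = circulant (Pi.single (-a) 1) := by
  rw [transpose_circulant]
  congr 1
  ext i
  simp [Pi.single_apply, neg_eq_iff_eq_neg]

variable [Fintype G] [Semiring α]

theorem Matrix.circulant_single_one_mul (a b : G) :
    circulant (Pi.single a (1 : α)) * circulant (Pi.single b 1) =
      circulant (Pi.single (a + b) 1) := by
  rw [circulant_mul, mulVec_single_one]
  congr 1
  ext i
  simp [circulant_apply, Pi.single_apply, sub_eq_iff_eq_add]

theorem Matrix.circulant_single_one_pow (a : G) (k : ℕ) :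
    circulant (Pi.single a (1 : α)) ^ k = circulant (Pi.single (k • a) 1) := by
  induction k with
  | zero => simp
  | succ k ih => rw [pow_succ, ih, circulant_single_one_mul, succ_nsmul]

theorem Matrix.circulant_single_one_pow_card (a : G) :
    circulant (Pi.single a (1 : α)) ^ Fintype.card G = 1 := by
  rw [circulant_single_one_pow, card_nsmul_eq_zero, circulant_single_one]

theorem Matrix.isUnit_one_add_circulant_single_one {α : Type*} [Ring α] (h2 : IsUnit (2 : α))
    (hG : Odd (Fintype.card G)) (a : G) : IsUnit (1 + circulant (Pi.single a (1 : α))) :=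
  isUnit_one_add_of_pow_eq_one (circulant_single_one_pow_card a) hG
    (by simpa only [map_ofNat] using h2.map (scalar G))

end CirculantSingle

open scoped Fin.CommRing in
theorem Fin.one_ne_neg_one {n : ℕ} [NeZero n] (hn : 3 ≤ n) : (1 : Fin n) ≠ -1 :=
  have : Fact (2 < n) := ⟨hn⟩
  (CharP.neg_one_ne_one (Fin n) n).symm

section

variable {n : ℕ} [NeZero n]

theorem matA_eq_circulant (hn : 3 ≤ n) :
    matA n = circulant (Pi.single 0 1 + (1 / 2 : ℝ) • (Pi.single 1 1 + Pi.single (-1) 1)) := by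
  have h := Fin.one_ne_neg_one hn
  ext i j
  obtain ⟨d, rfl⟩ : ∃ d, i = j + d := ⟨i - j, by abel⟩
  simp only [matA, circulant_apply, add_sub_cancel_left, Pi.add_apply, Pi.smul_apply,
    Pi.single_apply, add_assoc, add_sub_assoc, left_eq_add, add_eq_zero_iff_eq_neg, sub_eq_zero]
  split_ifs <;> simp_all

theorem matB_eq_circulant (hn : 3 ≤ n) :
    matB n = circulant (Pi.single (-1) 1 - Pi.single 1 1) := by
  have h := Fin.one_ne_neg_one hn
  ext i j
  obtain ⟨d, rfl⟩ : ∃ d, i = j + d := ⟨i - j, by abel⟩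
  simp only [matB, circulant_apply, add_sub_cancel_left, Pi.sub_apply, Pi.single_apply,
    add_assoc, add_sub_assoc, left_eq_add, add_eq_zero_iff_eq_neg, sub_eq_zero]
  split_ifs <;> simp_all

theorem matA_eq_half_smul_mul (hn : 3 ≤ n) :
    matA n =
      (1 / 2 : ℝ) • ((1 + circulant (Pi.single 1 1)) * (1 + circulant (Pi.single (-1) 1))) := by
  rw [matA_eq_circulant hn, circulant_add, circulant_smul, circulant_add, circulant_single_one,
    add_mul, mul_add, mul_add, one_mul, mul_one, one_mul, circulant_single_one_mul,
    add_neg_cancel, circulant_single_one]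
  module

theorem isUnit_matA (hn : 3 ≤ n) (hodd : Odd n) : IsUnit (matA n) := by
  have hcard : Odd (Fintype.card (Fin n)) := by rwa [Fintype.card_fin]
  have h2 : IsUnit (2 : ℝ) := two_ne_zero.isUnit
  rw [matA_eq_half_smul_mul hn, Algebra.smul_def]
  exact (isUnit_iff_ne_zero.mpr (by norm_num)).map (algebraMap ℝ _) |>.mul <|
    (isUnit_one_add_circulant_single_one h2 hcard 1).mul
      (isUnit_one_add_circulant_single_one h2 hcard (-1))

theorem transpose_matA (hn : 3 ≤ n) : (matA n)ᵀ = matA n := by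
  rw [matA_eq_half_smul_mul hn, transpose_smul, transpose_mul, transpose_add, transpose_add,
    transpose_one, transpose_circulant_single_one, transpose_circulant_single_one, neg_neg]

theorem transpose_matB (hn : 3 ≤ n) : (matB n)ᵀ = -matB n := by
  rw [matB_eq_circulant hn, circulant_sub, transpose_sub, transpose_circulant_single_one,
    transpose_circulant_single_one, neg_neg, neg_sub]

theorem commute_matA_matB (hn : 3 ≤ n) : Commute (matA n) (matB n) := by
  rw [matA_eq_circulant hn, matB_eq_circulant hn]
  exact circulant_mul_comm _ _

end

theorem matA_inv_matB_skew (n : ℕ) [NeZero n] (hn : 3 ≤ n) (hodd : Odd n) :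
    IsUnit (matA n) ∧ ((matA n)⁻¹ * matB n)ᵀ = -((matA n)⁻¹ * matB n) :=
  ⟨isUnit_matA hn hodd, transpose_inv_mul_eq_neg_of_commute (isUnit_matA hn hodd)
    (transpose_matA hn) (transpose_matB hn) (commute_matA_matB hn)⟩
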